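/- The cardinality of S_{m,n} equals the number of elements of N(m,n) of rank ⌊mn/2⌋, i.e. the central coefficient of (1 + q + ⋯ + q^n)^m. -/

import Mathlib

open Polynomial

/-- The rank of an element of `N(m,n)`: the sum of its coordinates. -/
def nRank {m n : ℕ} (c : Fin m → Fin (n + 1)) : ℕ := ∑ i, (c i : ℕ)

/-- Membership in `S_{m,n}` (with coordinates `0`-indexed, so row `t` of the
paper corresponds to index `t - 1`): `α_m = 0` and
`Σ_{i=t}^{m-1} αᵢ ≤ Σ_{i=t+1}^{m} (n - αᵢ)` for all `1 ≤ t ≤ m-1`. -/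
def memS {m n : ℕ} (c : Fin m → Fin (n + 1)) : Prop :=
  (∀ i : Fin m, (i : ℕ) = m - 1 → (c i : ℕ) = 0) ∧
  ∀ t : ℕ, 1 ≤ t → t ≤ m - 1 →
    ∑ i ∈ Finset.univ.filter (fun i : Fin m => t - 1 ≤ (i : ℕ) ∧ (i : ℕ) ≤ m - 2),
        (c i : ℕ)
      ≤ ∑ i ∈ Finset.univ.filter (fun i : Fin m => t ≤ (i : ℕ) ∧ (i : ℕ) ≤ m - 1),
          (n - (c i : ℕ))

instance {m n : ℕ} : DecidablePred (@memS m n) := fun _ => by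
  unfold memS; infer_instance


open Finset


def fcnt (n m : ℕ) (x : ℤ) : ℕ :=
  (Finset.univ.filter fun c : Fin m → Fin (n + 1) => (∑ i, (c i : ℤ)) = x).card

lemma fcnt_neg (n m : ℕ) {x : ℤ} (hx : x < 0) : fcnt n m x = 0 := by
  unfold fcnt
  rw [Finset.card_eq_zero, Finset.filter_eq_empty_iff]
  intro c _ h
  have : (0:ℤ) ≤ ∑ i, (c i : ℤ) := Finset.sum_nonneg fun i _ => by positivity
  omega

lemma sum_cons_int {n m : ℕ} (j : Fin (n+1)) (g : Fin m → Fin (n+1)) :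
    (∑ i, ((Fin.cons j g : Fin (m+1) → Fin (n+1)) i : ℤ)) = (j:ℤ) + ∑ i, (g i : ℤ) := by
  rw [Fin.sum_univ_succ]
  simp

lemma fcnt_succ (n m : ℕ) (x : ℤ) :
    fcnt n (m+1) x = ∑ j ∈ Finset.range (n+1), fcnt n m (x - j) := by
  unfold fcnt
  rw [Finset.card_eq_sum_card_fiberwise (f := fun c : Fin (m+1) → Fin (n+1) => c 0)
    (t := Finset.univ) (fun c _ => Finset.mem_univ _)]
  rw [← Fin.sum_univ_eq_sum_range]
  refine Finset.sum_congr rfl fun j _ => ?_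
  rw [Finset.filter_filter]
  refine Finset.card_bij' (fun c _ => Fin.tail c) (fun g _ => Fin.cons j g) ?_ ?_ ?_ ?_
  · intro c hc
    simp only [Finset.mem_filter, Finset.mem_univ, true_and] at hc ⊢
    obtain ⟨hs, h0⟩ := hc
    rw [Fin.sum_univ_succ, h0] at hs
    have h : ∀ i : Fin m, (Fin.tail c i : ℤ) = (c i.succ : ℤ) := fun i => rfl
    rw [Finset.sum_congr rfl fun i _ => h i]
    omega
  · intro g hg
    simp only [Finset.mem_filter, Finset.mem_univ, true_and] at hg ⊢
    refine ⟨?_, Fin.cons_zero _ _⟩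
    rw [sum_cons_int, hg]
    ring
  · intro c hc
    simp only [Finset.mem_filter, Finset.mem_univ, true_and] at hc
    obtain ⟨h1, h2⟩ := hc
    subst h2
    exact Fin.cons_self_tail c
  · intro g _
    exact Fin.tail_cons _ _

lemma sum_rev_int {n m : ℕ} (c : Fin m → Fin (n+1)) :
    (∑ i, ((c i).rev : ℤ)) = (m:ℤ) * n - ∑ i, (c i : ℤ) := by
  have h : ∀ i : Fin m, ((c i).rev : ℤ) = (n:ℤ) - (c i : ℤ) := by
    intro i
    have h1 := Fin.val_rev (c i)
    have h2 := (c i).is_le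
    have h3 : ((c i).rev : ℕ) = n - (c i : ℕ) := by omega
    rw [h3]
    push_cast [h2]
    ring
  rw [Finset.sum_congr rfl fun i _ => h i, Finset.sum_sub_distrib, Finset.sum_const]
  simp [mul_comm]

lemma fcnt_symm (n m : ℕ) (x : ℤ) : fcnt n m x = fcnt n m (m*n - x) := by
  unfold fcnt
  refine Finset.card_bij' (fun c _ => fun i => (c i).rev) (fun c _ => fun i => (c i).rev)
    ?_ ?_ ?_ ?_
  · intro c hc
    simp only [Finset.mem_filter, Finset.mem_univ, true_and] at hc ⊢
    rw [show (∑ i, (((fun i => (c i).rev) : Fin m → Fin (n+1)) i : ℤ)) = ∑ i, ((c i).rev : ℤ)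
      from rfl, sum_rev_int, hc]
  · intro c hc
    simp only [Finset.mem_filter, Finset.mem_univ, true_and] at hc ⊢
    rw [show (∑ i, (((fun i => (c i).rev) : Fin m → Fin (n+1)) i : ℤ)) = ∑ i, ((c i).rev : ℤ)
      from rfl, sum_rev_int, hc]
    ring
  · intro c _; funext i; exact Fin.rev_rev _
  · intro c _; funext i; exact Fin.rev_rev _

lemma fcnt_one (n : ℕ) (x : ℤ) : fcnt n 1 x = if 0 ≤ x ∧ x ≤ n then 1 else 0 := by
  unfold fcnt
  split_ifs with h
  · rw [Finset.card_eq_one]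
    refine ⟨fun _ => ⟨x.toNat, by omega⟩, ?_⟩
    ext c
    simp only [Finset.mem_filter, Finset.mem_univ, true_and, Finset.mem_singleton,
      Fin.sum_univ_one]
    constructor
    · intro hc
      funext i
      have hi : i = 0 := Subsingleton.elim _ _
      subst hi
      have hv : (c 0 : ℕ) = x.toNat := by omega
      exact Fin.ext hv
    · rintro rfl
      exact Int.toNat_of_nonneg h.1
  · rw [Finset.card_eq_zero, Finset.filter_eq_empty_iff]
    intro c _ hc
    rw [Fin.sum_univ_one] at hc
    have h2 : ((c 0 : ℕ) : ℤ) ≤ n := by exact_mod_cast (c 0).is_le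
    omega

lemma memS_one {n : ℕ} (c : Fin 1 → Fin (n+1)) : memS c ↔ (c 0 : ℕ) = 0 := by
  constructor
  · intro h; exact h.1 0 rfl
  · intro h
    refine ⟨fun i hi => ?_, fun t ht1 ht2 => by omega⟩
    have : i = 0 := Subsingleton.elim _ _
    rwa [this]

lemma memS_cons {m n : ℕ} (hm : 1 ≤ m) (j : Fin (n+1)) (g : Fin m → Fin (n+1)) :
    memS (Fin.cons j g : Fin (m+1) → Fin (n+1)) ↔
      memS g ∧ (j:ℕ) + 2 * ∑ i, (g i : ℕ) ≤ m * n := by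
  unfold memS
  -- abbreviations for the four kinds of sums
  have hAiff : (∀ i : Fin (m+1), (i : ℕ) = (m+1) - 1 →
        ((Fin.cons j g : Fin (m+1) → Fin (n+1)) i : ℕ) = 0)
      ↔ (∀ i : Fin m, (i : ℕ) = m - 1 → (g i : ℕ) = 0) := by
    constructor
    · intro h i hi
      have h2 := h i.succ (by rw [Fin.val_succ]; omega)
      rwa [Fin.cons_succ] at h2
    · intro h i hi
      rcases Fin.eq_zero_or_eq_succ i with h0 | ⟨i', rfl⟩
      · subst h0; simp at hi; omega
      · rw [Fin.cons_succ]
        apply h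
        rw [Fin.val_succ] at hi
        omega
  rw [hAiff, and_assoc]
  refine and_congr_right fun hA => ?_
  -- now the ∀ t part, given hA : last coordinate of g is 0
  -- shift lemmas for t ≥ 2
  have Lshift : ∀ t, 2 ≤ t → t ≤ m →
      (∑ i ∈ Finset.univ.filter
          (fun i : Fin (m+1) => t - 1 ≤ (i : ℕ) ∧ (i : ℕ) ≤ (m+1) - 2),
          ((Fin.cons j g : Fin (m+1) → Fin (n+1)) i : ℕ))
      = ∑ i ∈ Finset.univ.filter
          (fun i : Fin m => (t-1) - 1 ≤ (i : ℕ) ∧ (i : ℕ) ≤ m - 2), (g i : ℕ) := by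
    intro t ht htm
    rw [Finset.sum_filter, Finset.sum_filter, Fin.sum_univ_succ]
    simp only [Fin.cons_zero, Fin.cons_succ, Fin.val_zero, Fin.val_succ]
    rw [if_neg (show ¬(t - 1 ≤ (0:ℕ) ∧ (0:ℕ) ≤ m + 1 - 2) by omega)]
    rw [zero_add]
    refine Finset.sum_congr rfl fun i _ => ?_
    have hi := i.is_lt
    by_cases h : t - 1 ≤ (i:ℕ) + 1 ∧ (i:ℕ) + 1 ≤ m + 1 - 2
    · rw [if_pos h, if_pos (show t - 1 - 1 ≤ (i:ℕ) ∧ (i:ℕ) ≤ m - 2 by omega)]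
    · rw [if_neg h, if_neg (show ¬(t - 1 - 1 ≤ (i:ℕ) ∧ (i:ℕ) ≤ m - 2) by omega)]
  have Rshift : ∀ t, 2 ≤ t → t ≤ m →
      (∑ i ∈ Finset.univ.filter
          (fun i : Fin (m+1) => t ≤ (i : ℕ) ∧ (i : ℕ) ≤ (m+1) - 1),
          (n - ((Fin.cons j g : Fin (m+1) → Fin (n+1)) i : ℕ)))
      = ∑ i ∈ Finset.univ.filter
          (fun i : Fin m => t - 1 ≤ (i : ℕ) ∧ (i : ℕ) ≤ m - 1), (n - (g i : ℕ)) := by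
    intro t ht htm
    rw [Finset.sum_filter, Finset.sum_filter, Fin.sum_univ_succ]
    simp only [Fin.cons_zero, Fin.cons_succ, Fin.val_zero, Fin.val_succ]
    rw [if_neg (show ¬(t ≤ (0:ℕ) ∧ (0:ℕ) ≤ m + 1 - 1) by omega)]
    rw [zero_add]
    refine Finset.sum_congr rfl fun i _ => ?_
    have hi := i.is_lt
    by_cases h : t ≤ (i:ℕ) + 1 ∧ (i:ℕ) + 1 ≤ m + 1 - 1
    · rw [if_pos h, if_pos (show t - 1 ≤ (i:ℕ) ∧ (i:ℕ) ≤ m - 1 by omega)]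
    · rw [if_neg h, if_neg (show ¬(t - 1 ≤ (i:ℕ) ∧ (i:ℕ) ≤ m - 1) by omega)]
  -- the t = 1 instance
  have L1 : (∑ i ∈ Finset.univ.filter
        (fun i : Fin (m+1) => 1 - 1 ≤ (i : ℕ) ∧ (i : ℕ) ≤ (m+1) - 2),
        ((Fin.cons j g : Fin (m+1) → Fin (n+1)) i : ℕ))
      = (j:ℕ) + ∑ i, (g i : ℕ) := by
    rw [Finset.sum_filter, Fin.sum_univ_succ]
    simp only [Fin.cons_zero, Fin.cons_succ, Fin.val_zero, Fin.val_succ]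
    rw [if_pos (show 1 - 1 ≤ (0:ℕ) ∧ (0:ℕ) ≤ m + 1 - 2 by omega)]
    congr 1
    refine Finset.sum_congr rfl fun i _ => ?_
    have hi := i.is_lt
    by_cases h : 1 - 1 ≤ (i:ℕ) + 1 ∧ (i:ℕ) + 1 ≤ m + 1 - 2
    · rw [if_pos h]
    · rw [if_neg h]
      have : (i:ℕ) = m - 1 := by omega
      rw [hA i this]
  have R1 : (∑ i ∈ Finset.univ.filter
        (fun i : Fin (m+1) => 1 ≤ (i : ℕ) ∧ (i : ℕ) ≤ (m+1) - 1),
        (n - ((Fin.cons j g : Fin (m+1) → Fin (n+1)) i : ℕ)))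
      = ∑ i, (n - (g i : ℕ)) := by
    rw [Finset.sum_filter, Fin.sum_univ_succ]
    simp only [Fin.cons_zero, Fin.cons_succ, Fin.val_zero, Fin.val_succ]
    rw [if_neg (show ¬(1 ≤ (0:ℕ) ∧ (0:ℕ) ≤ m + 1 - 1) by omega), zero_add]
    refine Finset.sum_congr rfl fun i _ => ?_
    have hi := i.is_lt
    rw [if_pos (show 1 ≤ (i:ℕ) + 1 ∧ (i:ℕ) + 1 ≤ m + 1 - 1 by omega)]
  have Rtot : (∑ i, (n - (g i : ℕ))) + ∑ i, (g i : ℕ) = m * n := by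
    rw [← Finset.sum_add_distrib]
    rw [Finset.sum_congr rfl fun i _ => Nat.sub_add_cancel (g i).is_le]
    simp [mul_comm]
  constructor
  · intro h
    constructor
    · intro s hs1 hs2
      have h2 := h (s+1) (by omega) (by omega)
      rw [Lshift (s+1) (by omega) (by omega), Rshift (s+1) (by omega) (by omega)] at h2
      simpa using h2
    · have h1 := h 1 (by omega) (by omega)
      rw [L1, R1] at h1
      omega
  · rintro ⟨hg, hj⟩ t ht1 ht2
    rcases Nat.lt_or_ge t 2 with h2 | h2
    · have ht : t = 1 := by omega
      subst ht
      rw [L1, R1]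
      omega
    · rw [Lshift t h2 (by omega), Rshift t h2 (by omega)]
      exact hg (t-1) (by omega) (by omega)

def scnt (n m : ℕ) (x : ℤ) : ℕ :=
  (Finset.univ.filter fun c : Fin m → Fin (n + 1) =>
    memS c ∧ (∑ i, (c i : ℤ)) = x).card

lemma scnt_one (n : ℕ) (x : ℤ) : scnt n 1 x = if x = 0 then 1 else 0 := by
  unfold scnt
  split_ifs with hx
  · subst hx
    rw [Finset.card_eq_one]
    refine ⟨fun _ => 0, ?_⟩
    ext c
    simp only [Finset.mem_filter, Finset.mem_univ, true_and, Finset.mem_singleton, memS_one,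
      Fin.sum_univ_one]
    constructor
    · rintro ⟨h1, h2⟩
      funext i
      have hi : i = 0 := Subsingleton.elim _ _
      subst hi
      exact Fin.ext h1
    · rintro rfl
      simp
  · rw [Finset.card_eq_zero, Finset.filter_eq_empty_iff]
    rintro c - ⟨h1, h2⟩
    rw [memS_one] at h1
    rw [Fin.sum_univ_one] at h2
    apply hx
    rw [← h2]
    exact_mod_cast congrArg (fun k : ℕ => (k : ℤ)) h1

lemma scnt_succ (n m : ℕ) (hm : 1 ≤ m) (x : ℤ) :
    (scnt n (m+1) x : ℤ) =
      ∑ j ∈ Finset.range (n+1), if 2*x ≤ (m:ℤ)*n + j then (scnt n m (x - j) : ℤ) else 0 := by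
  have key : scnt n (m+1) x
      = ∑ j : Fin (n+1), if 2*x ≤ (m:ℤ)*n + (j:ℕ) then scnt n m (x - (j:ℕ)) else 0 := by
    unfold scnt
    rw [Finset.card_eq_sum_card_fiberwise (f := fun c : Fin (m+1) → Fin (n+1) => c 0)
      (t := Finset.univ) (fun c _ => Finset.mem_univ _)]
    refine Finset.sum_congr rfl fun j _ => ?_
    rw [Finset.filter_filter]
    have hcard : (Finset.univ.filter fun c : Fin (m+1) → Fin (n+1) =>
        (memS c ∧ (∑ i, (c i:ℤ)) = x) ∧ c 0 = j).card
        = (Finset.univ.filter fun g : Fin m → Fin (n+1) =>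
            (memS g ∧ (j:ℕ) + 2 * ∑ i, (g i:ℕ) ≤ m*n) ∧ (∑ i, (g i:ℤ)) = x - (j:ℕ)).card := by
      refine Finset.card_bij' (fun c _ => Fin.tail c) (fun g _ => Fin.cons j g) ?_ ?_ ?_ ?_
      · intro c hc
        simp only [Finset.mem_filter, Finset.mem_univ, true_and] at hc ⊢
        obtain ⟨⟨h1, h2⟩, h3⟩ := hc
        have hc' : c = Fin.cons j (Fin.tail c) := by
          rw [← h3]; exact (Fin.cons_self_tail c).symm
        rw [hc', memS_cons hm] at h1
        rw [hc', sum_cons_int] at h2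
        exact ⟨⟨h1.1, h1.2⟩, by omega⟩
      · intro g hg
        simp only [Finset.mem_filter, Finset.mem_univ, true_and] at hg ⊢
        obtain ⟨⟨h1, h2⟩, h3⟩ := hg
        refine ⟨⟨?_, ?_⟩, Fin.cons_zero _ _⟩
        · rw [memS_cons hm]; exact ⟨h1, h2⟩
        · rw [sum_cons_int]; omega
      · intro c hc
        simp only [Finset.mem_filter, Finset.mem_univ, true_and] at hc
        obtain ⟨h1, h2⟩ := hc
        subst h2
        exact Fin.cons_self_tail c
      · intro g _
        exact Fin.tail_cons _ _
    rw [hcard]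
    by_cases hcond : 2*x ≤ (m:ℤ)*n + (j:ℕ)
    · rw [if_pos hcond]
      show _ = (Finset.univ.filter fun g : Fin m → Fin (n + 1) =>
          memS g ∧ (∑ i, (g i : ℤ)) = x - ((j:ℕ):ℤ)).card
      congr 1
      refine Finset.filter_congr fun g _ => ?_
      constructor
      · rintro ⟨⟨h1, h2⟩, h3⟩; exact ⟨h1, h3⟩
      · rintro ⟨h1, h3⟩
        refine ⟨⟨h1, ?_⟩, h3⟩
        have hy : ((∑ i, (g i:ℕ) : ℕ) : ℤ) = x - (j:ℕ) := by
          rw [← h3]; push_cast; rfl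
        have hmn : ((m*n : ℕ) : ℤ) = (m:ℤ)*n := by push_cast; ring
        have : ((j:ℕ):ℤ) + 2 * ((∑ i, (g i:ℕ) : ℕ):ℤ) ≤ ((m*n:ℕ):ℤ) := by
          rw [hy, hmn]; linarith
        exact_mod_cast this
    · rw [if_neg hcond]
      rw [Finset.card_eq_zero, Finset.filter_eq_empty_iff]
      rintro g - ⟨⟨h1, h2⟩, h3⟩
      apply hcond
      have hy : ((∑ i, (g i:ℕ) : ℕ) : ℤ) = x - (j:ℕ) := by
        rw [← h3]; push_cast; rfl
      have hmn : ((m*n : ℕ) : ℤ) = (m:ℤ)*n := by push_cast; ring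
      have h2' : ((j:ℕ):ℤ) + 2 * ((∑ i, (g i:ℕ) : ℕ):ℤ) ≤ ((m*n:ℕ):ℤ) := by
        exact_mod_cast h2
      rw [hy, hmn] at h2'
      linarith
  rw [key, Nat.cast_sum, ← Fin.sum_univ_eq_sum_range
    (fun j => if 2*x ≤ (m:ℤ)*n + (j:ℕ) then (scnt n m (x - (j:ℕ)) : ℤ) else 0)]
  refine Finset.sum_congr rfl fun j _ => ?_
  split_ifs <;> simp

lemma main_lemma (n : ℕ) : ∀ m : ℕ, 1 ≤ m → ∀ x : ℤ, 2 * x ≤ (m:ℤ) * n →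
    (scnt n m x : ℤ) = (fcnt n m x : ℤ) - (fcnt n m (x - 1) : ℤ) := by
  intro m
  induction m with
  | zero => intro h; omega
  | succ m ih =>
    intro _ x hx
    rcases Nat.eq_zero_or_pos m with rfl | hm
    · rw [scnt_one, fcnt_one, fcnt_one]
      have hxn : 2 * x ≤ (n:ℤ) := by push_cast at hx; linarith
      have hn0 : (0:ℤ) ≤ n := by positivity
      split_ifs <;> push_cast <;> omega
    · rw [scnt_succ n m hm x]
      have hterm : ∀ j ∈ Finset.range (n+1),
          (if 2*x ≤ (m:ℤ)*n + j then (scnt n m (x - j) : ℤ) else 0)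
            = if 2*x ≤ (m:ℤ)*n + j
                then (fcnt n m (x - j) : ℤ) - (fcnt n m (x - (j+1)) : ℤ) else 0 := by
        intro j hj
        by_cases hc : 2*x ≤ (m:ℤ)*n + j
        · rw [if_pos hc, if_pos hc, ih hm (x - j) (by push_cast; push_cast at hc; linarith)]
          have : x - (j:ℤ) - 1 = x - ((j:ℤ)+1) := by ring
          rw [this]
        · rw [if_neg hc, if_neg hc]
      rw [Finset.sum_congr rfl hterm]
      have hR : (fcnt n (m+1) x : ℤ) - (fcnt n (m+1) (x-1) : ℤ)
          = ∑ j ∈ Finset.range (n+1),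
              ((fcnt n m (x - j) : ℤ) - (fcnt n m (x - ((j:ℕ)+1)) : ℤ)) := by
        rw [fcnt_succ, fcnt_succ]
        push_cast
        rw [← Finset.sum_sub_distrib]
        refine Finset.sum_congr rfl fun j _ => ?_
        have : x - 1 - (j:ℤ) = x - ((j:ℤ)+1) := by ring
        rw [this]
      rw [hR]
      set G : ℕ → ℤ := fun j => (fcnt n m (x - j) : ℤ) with hG
      have hfold : ∀ j : ℕ, (fcnt n m (x - j) : ℤ) - (fcnt n m (x - ((j:ℕ)+1)) : ℤ)
          = G j - G (j+1) := by
        intro j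
        simp only [hG]
        push_cast
        ring_nf
      rw [Finset.sum_congr rfl fun j _ => hfold j]
      rw [Finset.sum_congr rfl fun (j : ℕ) (_ : j ∈ Finset.range (n+1)) =>
        (by rw [hfold j] :
          (if 2*x ≤ (m:ℤ)*n + j
            then (fcnt n m (x - j) : ℤ) - (fcnt n m (x - ((j:ℕ)+1)) : ℤ) else 0)
          = (if 2*x ≤ (m:ℤ)*n + j then G j - G (j+1) else 0))]
      rw [Finset.sum_range_sub' G (n+1)]
      by_cases hbig : 2*x ≤ (m:ℤ)*n
      · rw [Finset.sum_congr rfl fun (j : ℕ) (_ : j ∈ Finset.range (n+1)) => if_pos (by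
          have h0j : (0:ℤ) ≤ (j:ℤ) := by positivity
          linarith)]
        rw [Finset.sum_range_sub' G (n+1)]
      · have hL0 : (0:ℤ) ≤ 2*x - (m:ℤ)*n := by linarith
        set L0 : ℕ := (2*x - (m:ℤ)*n).toNat with hL0def
        have hL0c : (L0:ℤ) = 2*x - (m:ℤ)*n := Int.toNat_of_nonneg hL0
        have hL0n : L0 ≤ n + 1 := by
          have : (L0:ℤ) ≤ ((n:ℤ)+1) := by
            rw [hL0c]; push_cast at hx ⊢; linarith
          exact_mod_cast this
        have hcond : ∀ j : ℕ, (2*x ≤ (m:ℤ)*n + j) ↔ L0 ≤ j := by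
          intro j
          constructor
          · intro h
            have : (L0:ℤ) ≤ (j:ℤ) := by rw [hL0c]; linarith
            exact_mod_cast this
          · intro h
            have : (L0:ℤ) ≤ (j:ℤ) := by exact_mod_cast h
            rw [hL0c] at this; linarith
        have hsplit : ∑ j ∈ Finset.range (n+1), (if 2*x ≤ (m:ℤ)*n + j then G j - G (j+1) else 0)
            = ∑ j ∈ Finset.Ico L0 (n+1), (G j - G (j+1)) := by
          rw [Finset.sum_congr rfl fun (j : ℕ) (_ : j ∈ Finset.range (n+1)) =>
            (by simp only [hcond j] :
              (if 2*x ≤ (m:ℤ)*n + j then G j - G (j+1) else 0)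
                = (if L0 ≤ j then G j - G (j+1) else 0))]
          rw [Finset.range_eq_Ico, ← Finset.sum_Ico_consecutive _ (Nat.zero_le L0) hL0n]
          have h1 : ∑ j ∈ Finset.Ico 0 L0, (if L0 ≤ j then G j - G (j+1) else 0) = 0 := by
            apply Finset.sum_eq_zero
            intro j hj
            rw [Finset.mem_Ico] at hj
            rw [if_neg (by omega)]
          have h2 : ∑ j ∈ Finset.Ico L0 (n+1), (if L0 ≤ j then G j - G (j+1) else 0)
              = ∑ j ∈ Finset.Ico L0 (n+1), (G j - G (j+1)) := by
            refine Finset.sum_congr rfl fun j hj => ?_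
            rw [Finset.mem_Ico] at hj
            rw [if_pos hj.1]
          rw [h1, h2, zero_add]
        rw [hsplit, Finset.sum_Ico_eq_sum_range]
        have hfix : L0 + (n + 1 - L0) = n + 1 := by omega
        have htel : ∑ i ∈ Finset.range (n + 1 - L0), (G (L0 + i) - G (L0 + i + 1))
            = G L0 - G (n+1) := by
          have h2 := Finset.sum_range_sub' (fun i => G (L0 + i)) (n + 1 - L0)
          simpa [hfix, add_assoc] using h2
        rw [htel]
        have hGL0 : G L0 = G 0 := by
          simp only [hG]
          rw [show x - (L0:ℤ) = (m:ℤ)*n - x by rw [hL0c]; ring]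
          rw [← fcnt_symm]
          norm_num
        rw [hGL0]

lemma coeff_base (n : ℕ) (k : ℕ) :
    (∑ j ∈ Finset.range (n + 1), (X : Polynomial ℤ) ^ j).coeff k
      = if k ≤ n then 1 else 0 := by
  rw [Polynomial.finset_sum_coeff]
  rw [Finset.sum_congr rfl fun j _ => Polynomial.coeff_X_pow j k]
  rw [Finset.sum_ite_eq (Finset.range (n+1)) k (fun _ => (1:ℤ))]
  simp [Nat.lt_succ_iff]

lemma coeff_eq_fcnt (n m : ℕ) (d : ℕ) :
    ((∑ j ∈ Finset.range (n + 1), (X : Polynomial ℤ) ^ j) ^ m).coeff d = fcnt n m d := by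
  induction m generalizing d with
  | zero =>
    rw [pow_zero, Polynomial.coeff_one]
    unfold fcnt
    by_cases hd : d = 0
    · subst hd
      rw [if_pos rfl, Finset.filter_true_of_mem, Finset.card_univ]
      · simp
      · intro c _
        simp
    · rw [if_neg (by exact_mod_cast hd)]
      have hz : (Finset.univ.filter fun c : Fin 0 → Fin (n + 1) =>
          (∑ i, (c i : ℤ)) = (d:ℤ)).card = 0 := by
        rw [Finset.card_eq_zero, Finset.filter_eq_empty_iff]
        intro c _
        simp only [Finset.univ_eq_empty, Finset.sum_empty]
        exact fun h => hd (by exact_mod_cast h.symm)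
      rw [hz]
      simp
  | succ m ih =>
    rw [pow_succ']
    rw [Polynomial.coeff_mul]
    rw [Finset.Nat.sum_antidiagonal_eq_sum_range_succ_mk]
    rw [fcnt_succ]
    push_cast
    -- both sides equal a common sum
    have lhs_eq : ∑ k ∈ Finset.range (d+1),
        (∑ j ∈ Finset.range (n + 1), (X : Polynomial ℤ) ^ j).coeff k
          * ((∑ j ∈ Finset.range (n + 1), (X : Polynomial ℤ) ^ j) ^ m).coeff (d - k)
        = ∑ k ∈ Finset.range (d+1),
            (if k ≤ n then ((fcnt n m ((d:ℤ) - k) : ℤ)) else 0) := by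
      refine Finset.sum_congr rfl fun k hk => ?_
      rw [Finset.mem_range] at hk
      rw [coeff_base, ih (d - k)]
      have : ((d - k : ℕ) : ℤ) = (d:ℤ) - k := by omega
      rw [this]
      split_ifs <;> ring
    rw [lhs_eq]
    set N := max (n+1) (d+1) with hN
    have h1 : ∑ k ∈ Finset.range (d+1), (if k ≤ n then ((fcnt n m ((d:ℤ) - k) : ℤ)) else 0)
        = ∑ k ∈ Finset.range N, (if k ≤ n then ((fcnt n m ((d:ℤ) - k) : ℤ)) else 0) := by
      apply Finset.sum_subset
      · exact Finset.range_subset_range.mpr (le_max_right _ _)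
      · intro k _ hk
        rw [Finset.mem_range] at hk
        push_neg at hk
        have : fcnt n m ((d:ℤ) - k) = 0 := fcnt_neg n m (by omega)
        rw [this]
        split_ifs <;> simp
    rw [h1]
    have h2a : ∑ k ∈ Finset.range (n+1), (if k ≤ n then ((fcnt n m ((d:ℤ) - k)):ℤ) else 0)
        = ∑ k ∈ Finset.range N, (if k ≤ n then ((fcnt n m ((d:ℤ) - k)):ℤ) else 0) :=
      Finset.sum_subset (Finset.range_subset_range.mpr (le_max_left _ _))
        (fun k _ hk => if_neg (by simp only [Finset.mem_range, not_lt] at hk; omega))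
    rw [← h2a]
    exact Finset.sum_congr rfl fun k hk =>
      if_pos (by simp only [Finset.mem_range] at hk; omega)

lemma memS_bound {m n : ℕ} (hm : 1 ≤ m) (c : Fin m → Fin (n+1)) (hc : memS c) :
    2 * nRank c ≤ m * n := by
  obtain ⟨m', rfl⟩ : ∃ m', m = m' + 1 := ⟨m - 1, by omega⟩
  rcases Nat.eq_zero_or_pos m' with rfl | hm'
  · have h0 : (c 0 : ℕ) = 0 := (memS_one c).mp hc
    unfold nRank
    rw [Fin.sum_univ_one, h0]
    simp
  · have hc' : c = Fin.cons (c 0) (Fin.tail c) := (Fin.cons_self_tail c).symm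
    rw [hc', memS_cons hm'] at hc
    have hy : nRank c = (c 0 : ℕ) + ∑ i, (Fin.tail c i : ℕ) := by
      unfold nRank
      rw [Fin.sum_univ_succ]
      rfl
    have hle := (c 0).is_le
    have hmul : (m'+1) * n = m' * n + n := by ring
    omega

/-- The cardinality of `S_{m,n}` equals the number of elements of `N(m,n)` of
rank `⌊mn/2⌋`, i.e. the central coefficient of `(1 + q + ⋯ + q^n)^m`. -/
theorem stmt_16 (m n : ℕ) (hm : 0 < m) (hn : 0 < n) :
    (Finset.univ.filter fun c : Fin m → Fin (n + 1) => memS c).card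
        = (Finset.univ.filter fun c : Fin m → Fin (n + 1) => nRank c = m * n / 2).card ∧
    (((Finset.univ.filter fun c : Fin m → Fin (n + 1) => memS c).card : ℤ)
        = ((∑ j ∈ Finset.range (n + 1), (X : Polynomial ℤ) ^ j) ^ m).coeff (m * n / 2)) := by
  have hdiv : ∀ K y : ℕ, 2 * y ≤ K → y < K / 2 + 1 := fun K y h => by omega
  have hdiv2 : ∀ K r : ℕ, r < K / 2 + 1 → 2 * r ≤ K := fun K r h => by omega
  -- step 1 : partition by rank
  have hfib : (Finset.univ.filter fun c : Fin m → Fin (n + 1) => memS c).card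
      = ∑ r ∈ Finset.range (m * n / 2 + 1), scnt n m (r : ℤ) := by
    rw [Finset.card_eq_sum_card_fiberwise (f := fun c : Fin m → Fin (n+1) => nRank c)
      (t := Finset.range (m * n / 2 + 1)) (fun c hc => by
        rw [Finset.mem_coe, Finset.mem_filter] at hc
        rw [Finset.mem_coe, Finset.mem_range]
        exact hdiv _ _ (memS_bound hm c hc.2))]
    refine Finset.sum_congr rfl fun r _ => ?_
    rw [Finset.filter_filter]
    unfold scnt
    congr 1
    refine Finset.filter_congr fun c _ => ?_
    have hcast : (∑ i, (c i : ℤ)) = ((nRank c : ℕ) : ℤ) := by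
      unfold nRank; push_cast; rfl
    constructor
    · rintro ⟨h1, h2⟩
      exact ⟨h1, by rw [hcast]; exact_mod_cast h2⟩
    · rintro ⟨h1, h2⟩
      rw [hcast] at h2
      exact ⟨h1, by exact_mod_cast h2⟩
  -- step 2 : telescoping
  have hkey : ((Finset.univ.filter fun c : Fin m → Fin (n + 1) => memS c).card : ℤ)
      = (fcnt n m ((m * n / 2 : ℕ) : ℤ) : ℤ) := by
    rw [hfib]
    push_cast
    set H : ℕ → ℤ := fun r => (fcnt n m ((r:ℤ) - 1) : ℤ) with hH
    have hterm : ∀ r ∈ Finset.range (m * n / 2 + 1),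
        ((scnt n m (r : ℤ)) : ℤ) = H (r+1) - H r := by
      intro r hr
      rw [Finset.mem_range] at hr
      have h2r : 2 * ((r:ℕ):ℤ) ≤ (m:ℤ) * n := by
        have := hdiv2 (m*n) r hr
        exact_mod_cast (by push_cast; exact_mod_cast this :
          ((2 * r : ℕ) : ℤ) ≤ ((m * n : ℕ) : ℤ))
      rw [main_lemma n m hm (r : ℤ) h2r]
      simp only [hH]
      push_cast
      ring_nf
    rw [Finset.sum_congr rfl hterm, Finset.sum_range_sub H (m * n / 2 + 1)]
    have hH0 : H 0 = 0 := by
      simp only [hH]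
      have h1 : ((0:ℕ):ℤ) - 1 = -1 := by norm_num
      rw [h1, fcnt_neg n m (by norm_num : (-1:ℤ) < 0)]
      norm_num
    rw [hH0]
    simp only [hH]
    push_cast
    ring_nf
  -- step 3 : fcnt equals the rank-count
  have hrank : (fcnt n m ((m * n / 2 : ℕ) : ℤ) : ℤ)
      = ((Finset.univ.filter fun c : Fin m → Fin (n + 1) =>
          nRank c = m * n / 2).card : ℤ) := by
    unfold fcnt
    congr 2
    refine Finset.filter_congr fun c _ => ?_
    have hcast : (∑ i, (c i : ℤ)) = ((nRank c : ℕ) : ℤ) := by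
      unfold nRank; push_cast; rfl
    rw [hcast]
    exact_mod_cast Iff.rfl
  constructor
  · exact_mod_cast hkey.trans hrank
  · rw [coeff_eq_fcnt]
    exact hkey
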